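/- Let G and H be graphs on n and m vertices respectively, and suppose Dominator has a winning strategy in the Maker–Breaker domination game (as first and second player) on G. Then γ'_MB(G □ H) ≤ m·γ'_MB(G). -/
import Mathlib


namespace MBD

variable {V : Type*} [DecidableEq V]

/-- `D` dominates every vertex of the target set `T`. -/
def Dominates (G : SimpleGraph V) (D T : Finset V) : Prop :=
  ∀ v ∈ T, v ∈ D ∨ ∃ u ∈ D, G.Adj u v

/-- `DomWins G T k D S t` : in the Maker–Breaker domination game on `G` with target
set `T`, current Dominator set `D`, Staller set `S`, and `t = true` iff it is
Dominator's turn, Dominator can guarantee that his claimed set dominates `T`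
after at most `k` further moves of his own. -/
inductive DomWins (G : SimpleGraph V) (T : Finset V) :
    ℕ → Finset V → Finset V → Bool → Prop
  | won {k : ℕ} {D S : Finset V} {t : Bool} :
      Dominates G D T → DomWins G T k D S t
  | dmove {k : ℕ} {D S : Finset V} (v : V) :
      v ∉ D → v ∉ S → DomWins G T k (insert v D) S false →
      DomWins G T (k + 1) D S true
  | smove {k : ℕ} {D S : Finset V} :
      (∀ v : V, v ∉ D → v ∉ S → DomWins G T k D (insert v S) true) →
      DomWins G T k D S false

/-- Minimum number of Dominator moves needed to win from the initial position where
Staller already owns `S₀` and `domFirst` tells who moves first. -/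
noncomputable def MBNum (G : SimpleGraph V) (T S₀ : Finset V) (domFirst : Bool) : ℕ :=
  sInf {k | DomWins G T k ∅ S₀ domFirst}

/-- The Maker–Breaker domination number (Dominator moves first). -/
noncomputable def gammaMB (G : SimpleGraph V) [Fintype V] : ℕ :=
  MBNum G Finset.univ ∅ true

/-- The Maker–Breaker domination number when Staller moves first. -/
noncomputable def gammaMB' (G : SimpleGraph V) [Fintype V] : ℕ :=
  MBNum G Finset.univ ∅ false

/-- The domination number of a graph. -/
noncomputable def dominationNumber (G : SimpleGraph V) [Fintype V] : ℕ :=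
  sInf {n | ∃ D : Finset V, D.card = n ∧ Dominates G D Finset.univ}

end MBD


namespace MBDAux
open Finset

variable {V : Type*} [DecidableEq V]

lemma bud {G : SimpleGraph V} {T : Finset V} :
    ∀ {k k' : ℕ} {D S : Finset V} {t : Bool},
      MBD.DomWins G T k D S t → k ≤ k' → MBD.DomWins G T k' D S t := by
  intro k k' D S t h
  induction h generalizing k' with
  | won h => exact fun _ => MBD.DomWins.won h
  | dmove v h1 h2 h3 ih =>
      intro hle
      obtain ⟨k'', rfl⟩ : ∃ k'', k' = k'' + 1 := ⟨k' - 1, by omega⟩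
      exact MBD.DomWins.dmove v h1 h2 (ih (by omega))
  | smove h ih =>
      intro hle
      exact MBD.DomWins.smove fun v hv1 hv2 => ih v hv1 hv2 hle

lemma true_inv {G : SimpleGraph V} {T : Finset V} {k : ℕ} {D S : Finset V}
    (h : MBD.DomWins G T k D S true) :
    MBD.Dominates G D T ∨
      ∃ k' u, k = k' + 1 ∧ u ∉ D ∧ u ∉ S ∧ MBD.DomWins G T k' (insert u D) S false := by
  cases h with
  | won h => exact Or.inl h
  | dmove u h1 h2 h3 => exact Or.inr ⟨_, u, rfl, h1, h2, h3⟩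

lemma false_inv {G : SimpleGraph V} {T : Finset V} {k : ℕ} {D S : Finset V}
    (h : MBD.DomWins G T k D S false) :
    MBD.Dominates G D T ∨
      ∀ v, v ∉ D → v ∉ S → MBD.DomWins G T k D (insert v S) true := by
  cases h with
  | won h => exact Or.inl h
  | smove h => exact Or.inr h

variable [Fintype V]

lemma exists_free {D S : Finset V} (hd : Disjoint D S)
    (hcard : D.card + S.card < Fintype.card V) :
    ∃ u, u ∉ D ∧ u ∉ S := by
  by_contra hc
  push_neg at hc
  have hsub : (univ : Finset V) ⊆ D ∪ S := by
    intro x _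
    rcases Classical.em (x ∈ D) with h | h
    · exact mem_union_left _ h
    · exact mem_union_right _ (hc x h)
  have := card_le_card hsub
  rw [card_union_of_disjoint hd, card_univ] at this
  omega

lemma fill (G : SimpleGraph V) (T : Finset V) :
    ∀ (j : ℕ) (D S : Finset V), (Finset.univ \ (D ∪ S)).card = 2 * j →
      MBD.DomWins G T j D S false := by
  intro j
  induction j with
  | zero =>
      intro D S h
      refine MBD.DomWins.smove fun v hv1 hv2 => ?_
      exfalso
      have hm : v ∈ Finset.univ \ (D ∪ S) := by simp [hv1, hv2]
      rw [Finset.card_eq_zero.mp h] at hm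
      exact absurd hm (notMem_empty v)
  | succ j IH =>
      intro D S h
      refine MBD.DomWins.smove fun v hv1 hv2 => ?_
      have hveq : Finset.univ \ (D ∪ insert v S) = (Finset.univ \ (D ∪ S)).erase v := by
        ext x; by_cases hx : x = v <;> simp [hx, and_comm, not_or] <;> tauto
      have hvmem : v ∈ Finset.univ \ (D ∪ S) := by simp [hv1, hv2]
      have hc1 : (Finset.univ \ (D ∪ insert v S)).card = 2 * j + 1 := by
        rw [hveq, card_erase_of_mem hvmem, h]; omega
      have hne : (Finset.univ \ (D ∪ insert v S)).Nonempty := by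
        rw [← card_pos, hc1]; omega
      obtain ⟨u, hu⟩ := hne
      rw [mem_sdiff, mem_union, not_or] at hu
      have huD := hu.2.1
      have huS := hu.2.2
      refine MBD.DomWins.dmove u huD huS (IH _ _ ?_)
      have : Finset.univ \ (insert u D ∪ insert v S)
          = (Finset.univ \ (D ∪ insert v S)).erase u := by
        ext x; by_cases hx : x = u <;> simp [hx, and_comm, not_or] <;> tauto
      have humem : u ∈ Finset.univ \ (D ∪ insert v S) := by simp only [mem_sdiff, mem_union, not_or]; exact ⟨mem_univ u, huD, huS⟩
      rw [this, card_erase_of_mem humem, hc1]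
      omega




variable {V W : Type*} [Fintype V] [DecidableEq V] [Fintype W] [DecidableEq W]

/-- Glue a family of per-copy finsets into a finset of the product. -/
def glue (f : W → Finset V) : Finset (V × W) :=
  Finset.univ.filter (fun p => p.1 ∈ f p.2)

lemma mem_glue {f : W → Finset V} {p : V × W} : p ∈ glue f ↔ p.1 ∈ f p.2 := by
  simp [glue]

lemma glue_empty : glue (fun _ : W => (∅ : Finset V)) = ∅ := by
  ext p; simp [mem_glue]

lemma glue_update (f : W → Finset V) (w : W) (v : V) :
    glue (Function.update f w (insert v (f w))) = insert (v, w) (glue f) := by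
  ext ⟨x, y⟩
  by_cases h : y = w
  · subst h
    simp [mem_glue, Function.update_self, Prod.ext_iff]
  · simp [mem_glue, Function.update_of_ne h, Prod.ext_iff, h]

lemma dominates_glue (G : SimpleGraph V) (H : SimpleGraph W) {f : W → Finset V}
    (hG : ∀ w, MBD.Dominates G (f w) Finset.univ) :
    MBD.Dominates (G.boxProd H) (glue f) Finset.univ := by
  rintro ⟨v, w⟩ -
  rcases hG w v (mem_univ v) with h | ⟨u, hu, hadj⟩
  · exact Or.inl (mem_glue.mpr h)
  · exact Or.inr ⟨(u, w), mem_glue.mpr hu, SimpleGraph.boxProd_adj.mpr (Or.inl ⟨hadj, rfl⟩)⟩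

/-- The invariant maintained in every copy of `G`. -/
def Inv (G : SimpleGraph V) (k₀ : ℕ) (kf : W → ℕ) (Df Sf Bf : W → Finset V) : Prop :=
  ∀ w, MBD.Dominates G (Df w) Finset.univ ∨
    (MBD.DomWins G Finset.univ (kf w) (Df w) (Sf w) false ∧
     Disjoint (Df w) (Sf w) ∧ (Sf w).card = (Df w).card ∧
     (Df w).card + kf w = k₀ ∧ Bf w ⊆ Sf w)

lemma sim (G : SimpleGraph V) (H : SimpleGraph W) (k₀ : ℕ)
    (hn : 2 * k₀ < Fintype.card V ∨ Odd (Fintype.card V)) :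
    ∀ (K : ℕ) (kf : W → ℕ) (Df Sf Bf : W → Finset V),
      Inv G k₀ kf Df Sf Bf → (∑ w, kf w) = K →
      MBD.DomWins (G.boxProd H) Finset.univ K (glue Df) (glue Bf) false := by
  intro K
  induction K using Nat.strong_induction_on with
  | _ K IH =>
  intro kf Df Sf Bf hinv hK
  refine MBD.DomWins.smove ?_
  rintro ⟨v, w⟩ hvD hvB
  have hvD' : v ∉ Df w := fun h => hvD (mem_glue.mpr h)
  have hvB' : v ∉ Bf w := fun h => hvB (mem_glue.mpr h)
  -- rewrite Staller set as a glue
  rw [← glue_update Bf w v]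
  set Bf' := Function.update Bf w (insert v (Bf w)) with hBf'
  by_cases hstep : ¬ MBD.Dominates G (Df w) Finset.univ ∧ v ∉ Sf w
  · -- real step in copy w
    obtain ⟨hnd, hvS⟩ := hstep
    rcases hinv w with h | ⟨hDW, hdisj, hcards, hbud, hB⟩
    · exact absurd h hnd
    rcases false_inv hDW with h | hstep2
    · exact absurd h hnd
    rcases true_inv (hstep2 v hvD' hvS) with h | ⟨k'', u₂, hkeq, hu₂D, hu₂S, hchild⟩
    · exact absurd h hnd
    have hu₂v : u₂ ≠ v := fun h => hu₂S (h ▸ mem_insert_self v (Sf w))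
    have hu₂S' : u₂ ∉ Sf w := fun h => hu₂S (mem_insert_of_mem h)
    -- new state
    set kf' := Function.update kf w k'' with hkf'
    set Df' := Function.update Df w (insert u₂ (Df w)) with hDf'
    set Sf' := Function.update Sf w (insert v (Sf w)) with hSf'
    have hsum : ∑ x, kf' x + 1 = K := by
      have h1 : ∑ x, kf' x = k'' + ∑ x ∈ univ \ {w}, kf x := by
        rw [hkf']; exact Finset.sum_update_of_mem (mem_univ w) kf k''
      have h2 : ∑ x : W, kf x = kf w + ∑ x ∈ univ \ {w}, kf x :=
        Finset.sum_eq_add_sum_sdiff_singleton_of_mem (mem_univ w) kf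
      omega
    rw [← hsum]
    refine MBD.DomWins.dmove (u₂, w) ?_ ?_ ?_
    · exact fun h => hu₂D (mem_glue.mp h)
    · intro h
      rcases mem_glue.mp h with h'
      rw [hBf', Function.update_self] at h'
      rcases mem_insert.mp h' with h'' | h''
      · exact hu₂v h''
      · exact hu₂S' (hB h'')
    · rw [← glue_update Df w u₂]
      have hinv' : Inv G k₀ kf' Df' Sf' Bf' := by
        intro w₁
        by_cases hw₁ : w₁ = w
        · subst hw₁
          refine Or.inr ⟨?_, ?_, ?_, ?_, ?_⟩
          · simpa [hkf', hDf', hSf'] using hchild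
          · rw [hDf', hSf']
            simp only [Function.update_self]
            rw [Finset.disjoint_left]
            intro a haD haS
            rcases mem_insert.mp haD with rfl | haD'
            · exact hu₂S haS
            · rcases mem_insert.mp haS with rfl | haS'
              · exact hvD' haD'
              · exact (Finset.disjoint_left.mp hdisj haD') haS'
          · rw [hDf', hSf']
            simp only [Function.update_self]
            rw [card_insert_of_notMem hvS, card_insert_of_notMem hu₂D, hcards]
          · rw [hDf', hkf']
            simp only [Function.update_self]
            rw [card_insert_of_notMem hu₂D]
            omega
          · rw [hBf', hSf']
            simp only [Function.update_self]
            exact insert_subset_insert v hB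
        · rw [hkf', hDf', hSf', hBf']
          simp only [Function.update_of_ne hw₁]
          exact hinv w₁
      exact IH _ (by omega) kf' Df' Sf' Bf' hinv' rfl
  · -- no derivation step in copy w (finished copy or phantom vertex)
    push_neg at hstep
    have hinvB : Inv G k₀ kf Df Sf Bf' := by
      intro w₁
      by_cases hw₁ : w₁ = w
      · subst hw₁
        rcases Classical.em (MBD.Dominates G (Df w₁) Finset.univ) with h | h
        · exact Or.inl h
        · rcases hinv w₁ with h' | ⟨hDW, hdisj, hcards, hbud, hB⟩
          · exact absurd h' h
          · refine Or.inr ⟨hDW, hdisj, hcards, hbud, ?_⟩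
            rw [hBf', Function.update_self]
            exact insert_subset (hstep h) hB
      · rw [hBf', Function.update_of_ne hw₁]
        exact hinv w₁
    -- Dominator response
    by_cases hall : ∀ w₁, MBD.Dominates G (Df w₁) Finset.univ
    · exact MBD.DomWins.won (dominates_glue G H hall)
    · push_neg at hall
      obtain ⟨w', hw'⟩ := hall
      rcases hinvB w' with h | ⟨hDW, hdisj, hcards, hbud, hB⟩
      · exact absurd h hw'
      have hfree : ∃ u, u ∉ Df w' ∧ u ∉ Sf w' := by
        apply exists_free hdisj
        rcases hn with hn | hn
        · omega
        · have hle : (Df w').card + (Sf w').card ≤ Fintype.card V := by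
            have := card_le_card (Finset.subset_univ (Df w' ∪ Sf w'))
            rw [card_union_of_disjoint hdisj, card_univ] at this
            exact this
          rcases Nat.lt_or_ge ((Df w').card + (Sf w').card) (Fintype.card V) with h | h
          · exact h
          · exfalso
            have : (Df w').card + (Sf w').card = Fintype.card V := le_antisymm hle h
            rw [hcards] at this
            exact (Nat.not_odd_iff_even.mpr ⟨(Df w').card, by omega⟩) (this ▸ hn)
      obtain ⟨u, huD, huS⟩ := hfree
      rcases false_inv hDW with h | hstep2
      · exact absurd h hw'
      rcases true_inv (hstep2 u huD huS) with h | ⟨k'', u₂, hkeq, hu₂D, hu₂S, hchild⟩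
      · exact absurd h hw'
      have hu₂u : u₂ ≠ u := fun h => hu₂S (h ▸ mem_insert_self u (Sf w'))
      have hu₂S' : u₂ ∉ Sf w' := fun h => hu₂S (mem_insert_of_mem h)
      set kf' := Function.update kf w' k'' with hkf'
      set Df' := Function.update Df w' (insert u₂ (Df w')) with hDf'
      set Sf' := Function.update Sf w' (insert u (Sf w')) with hSf'
      have hsum : ∑ x, kf' x + 1 = K := by
        have h1 : ∑ x, kf' x = k'' + ∑ x ∈ univ \ {w'}, kf x := by
          rw [hkf']; exact Finset.sum_update_of_mem (mem_univ w') kf k''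
        have h2 : ∑ x : W, kf x = kf w' + ∑ x ∈ univ \ {w'}, kf x :=
          Finset.sum_eq_add_sum_sdiff_singleton_of_mem (mem_univ w') kf
        omega
      rw [← hsum]
      refine MBD.DomWins.dmove (u₂, w') ?_ ?_ ?_
      · exact fun h => hu₂D (mem_glue.mp h)
      · exact fun h => hu₂S' (hB (mem_glue.mp h))
      · rw [← glue_update Df w' u₂]
        have hinv' : Inv G k₀ kf' Df' Sf' Bf' := by
          intro w₁
          by_cases hw₁ : w₁ = w'
          · subst hw₁
            refine Or.inr ⟨?_, ?_, ?_, ?_, ?_⟩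
            · simpa [hkf', hDf', hSf'] using hchild
            · rw [hDf', hSf']
              simp only [Function.update_self]
              rw [Finset.disjoint_left]
              intro a haD haS
              rcases mem_insert.mp haD with rfl | haD'
              · exact hu₂S haS
              · rcases mem_insert.mp haS with rfl | haS'
                · exact huD haD'
                · exact (Finset.disjoint_left.mp hdisj haD') haS'
            · rw [hDf', hSf']
              simp only [Function.update_self]
              rw [card_insert_of_notMem huS, card_insert_of_notMem hu₂D, hcards]
            · rw [hDf', hkf']
              simp only [Function.update_self]
              rw [card_insert_of_notMem hu₂D]
              omega
            · rw [hSf']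
              simp only [Function.update_self]
              exact hB.trans (subset_insert u (Sf w₁))
          · rw [hkf', hDf', hSf']
            simp only [Function.update_of_ne hw₁]
            exact hinvB w₁
        exact IH _ (by omega) kf' Df' Sf' Bf' hinv' rfl

end MBDAux

theorem stmt4 {V W : Type*} [Fintype V] [DecidableEq V] [Fintype W] [DecidableEq W]
    (G : SimpleGraph V) (H : SimpleGraph W)
    (h1 : ∃ k, MBD.DomWins G Finset.univ k ∅ ∅ true)
    (h2 : ∃ k, MBD.DomWins G Finset.univ k ∅ ∅ false) :
    MBD.gammaMB' (G.boxProd H) ≤ Fintype.card W * MBD.gammaMB' G := by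
  classical
  obtain ⟨k2, hk2⟩ := h2
  have hne : {k | MBD.DomWins G Finset.univ k ∅ ∅ false}.Nonempty := ⟨k2, hk2⟩
  have hmem : MBD.DomWins G Finset.univ (MBD.gammaMB' G) ∅ ∅ false := by
    unfold MBD.gammaMB' MBD.MBNum
    exact Nat.sInf_mem hne
  set k₀ := MBD.gammaMB' G with hk₀def
  have hwin : MBD.DomWins (G.boxProd H) Finset.univ (Fintype.card W * k₀) ∅ ∅ false := by
    by_cases hcase : 2 * k₀ < Fintype.card V ∨ Odd (Fintype.card V)
    · have hinv : MBDAux.Inv G k₀ (fun _ => k₀) (fun _ => ∅) (fun _ => ∅)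
          (fun _ : W => (∅ : Finset V)) := by
        intro w
        exact Or.inr ⟨hmem, by simp, by simp, by simp, by simp⟩
      have hsum : (∑ _w : W, k₀) = Fintype.card W * k₀ := by
        simp [Finset.sum_const, Finset.card_univ, mul_comm]
      have := MBDAux.sim G H k₀ hcase (Fintype.card W * k₀)
        (fun _ => k₀) (fun _ => ∅) (fun _ => ∅) (fun _ => ∅) hinv hsum
      simpa [MBDAux.glue_empty] using this
    · push_neg at hcase
      obtain ⟨hge, heven⟩ := hcase
      rw [Nat.not_odd_iff_even] at heven
      obtain ⟨r, hr⟩ := heven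
      have hcard : ((Finset.univ : Finset (V × W)) \ (∅ ∪ ∅)).card
          = 2 * (r * Fintype.card W) := by
        simp only [Finset.union_empty, Finset.empty_union, Finset.sdiff_empty,
          Finset.card_univ, Fintype.card_prod]
        rw [hr]; ring
      have hfill := MBDAux.fill (G.boxProd H) Finset.univ (r * Fintype.card W) ∅ ∅ hcard
      refine MBDAux.bud hfill ?_
      have hrk : r ≤ k₀ := by omega
      calc r * Fintype.card W ≤ k₀ * Fintype.card W := Nat.mul_le_mul_right _ hrk
        _ = Fintype.card W * k₀ := mul_comm _ _
  unfold MBD.gammaMB' MBD.MBNum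
  exact Nat.sInf_le hwin
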